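/- arXiv:2409.11322 — 5 statements merged into one kernel-verified Lean document; each statement's English description precedes it below -/
import Mathlib

section
/- Let n ≥ 1 and let bV, bF : ℤ × ℤ → EuclideanSpace ℝ (Fin n) be a binet. Then there exist functions ρV, ρF : ℤ × ℤ → ℝ such that ⟪bV(v), bF(f)⟫ = ρV(v) + ρF(f) for every incident vertex–face pair (v, f), if and only if (bV, bF) is an orthogonal binet, i.e. for every v ∈ ℤ × ℤ one has ⟪bV(v+(1,0)) − bV(v), bF(v) − bF(v−(0,1))⟫ = 0 and ⟪bV(v+(0,1)) − bV(v), bF(v) − bF(v−(1,0))⟫ = 0. (This is the coordinate form of the theorem that a binet admits a Möbius lift — an orthogonal sphere representation with centers b(d) and 2ρ(d) = ‖center‖² − radius² — if and only if it is an orthogonal binet.) -/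
open scoped InnerProductSpace

/-- A vertex `v` is incident to the face labeled `f` if `v` is one of its four corners. -/
def Incident (v f : ℤ × ℤ) : Prop :=
  v = f ∨ v = f + (1, 0) ∨ v = f + (0, 1) ∨ v = f + (1, 1)

/-!
The incidence graph of vertices and faces of `ℤ²` is again a square lattice, whose elementary
quadrilaterals are exactly the crosses. For an edge `(v, v + e)` of a cross with faces `f, f'`,
the orthogonality condition says `⟪bV (v + e) - bV v, bF f⟫ = ⟪bV (v + e) - bV v, bF f'⟫`: the
increment of `⟪bV ·, bF f⟫` along the edge does not depend on the face. These increments form a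
closed discrete 1-form on the vertex lattice, so they are the increments of a potential `ρV`
(a discrete Poincaré lemma), and then `⟪bV v, bF f⟫ - ρV v` is constant on the corners of `f`.
-/

open Finset

section AddCommGroup

variable {G : Type*} [AddCommGroup G]

theorem Int.exists_add_one_eq_add (f : ℤ → G) : ∃ F : ℤ → G, ∀ x, F (x + 1) = F x + f x := by
  refine ⟨fun x => ∑ i ∈ Ico 0 x, f i - ∑ i ∈ Ico x 0, f i, fun x => ?_⟩
  dsimp only
  rcases le_or_gt 0 x with hx | hx
  · rw [← insert_Ico_right_eq_Ico_add_one hx, sum_insert (by simp),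
      Ico_eq_empty_of_le (by omega : (0 : ℤ) ≤ x + 1), Ico_eq_empty_of_le hx]
    abel
  · rw [← insert_Ico_add_one_left_eq_Ico hx, sum_insert (by simp),
      Ico_eq_empty_of_le (by omega : x + 1 ≤ 0), Ico_eq_empty_of_le hx.le]
    abel

theorem exists_potential_of_closed (α β : ℤ × ℤ → G)
    (hclosed : ∀ v, α v + β (v + (1, 0)) = β v + α (v + (0, 1))) :
    ∃ A : ℤ × ℤ → G, ∀ v, A (v + (1, 0)) = A v + α v ∧ A (v + (0, 1)) = A v + β v := by
  obtain ⟨F, hF⟩ := Int.exists_add_one_eq_add fun x => α (x, 0)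
  choose P hP using fun x => Int.exists_add_one_eq_add fun y => β (x, y)
  refine ⟨fun v => F v.1 + (P v.1 v.2 - P v.1 0), fun ⟨x, y⟩ => ⟨?_, ?_⟩⟩
  · let D : ℤ → G := fun y => F (x + 1) + (P (x + 1) y - P (x + 1) 0)
      - (F x + (P x y - P x 0)) - α (x, y)
    have hD : Function.Periodic D 1 := fun y => by
      have hα : α (x, y + 1) = α (x, y) + β (x + 1, y) - β (x, y) := by
        have := hclosed (x, y)
        simp only [Prod.mk_add_mk, add_zero] at this
        rw [eq_sub_iff_add_eq, this, add_comm]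
      simp only [D, hP, hα]
      abel
    have hD0 : D y = 0 := by simpa [D, hF] using hD.int_mul_eq y
    simp only [Prod.mk_add_mk, add_zero]
    rw [← sub_eq_zero, ← hD0]
    dsimp only [D]
    abel
  · simp only [Prod.mk_add_mk, add_zero, hP]
    abel

theorem exists_split_on_incident_iff (H : ℤ × ℤ → ℤ × ℤ → G) :
    (∃ ρV ρF : ℤ × ℤ → G, ∀ v f, Incident v f → H v f = ρV v + ρF f) ↔
      ∀ v : ℤ × ℤ, H (v + (1, 0)) v - H v v = H (v + (1, 0)) (v - (0, 1)) - H v (v - (0, 1)) ∧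
        H (v + (0, 1)) v - H v v = H (v + (0, 1)) (v - (1, 0)) - H v (v - (1, 0)) := by
  have hdiag : ∀ v : ℤ × ℤ, v + (1, 0) + (0, 1) = v + (1, 1) ∧ v + (0, 1) + (1, 0) = v + (1, 1) :=
    fun v => ⟨by simp [add_assoc], by simp [add_assoc]⟩
  constructor
  · rintro ⟨ρV, ρF, hρ⟩ v
    have hedge : ∀ w w' f, Incident w f → Incident w' f → H w' f - H w f = ρV w' - ρV w := by
      intro w w' f hw hw'
      rw [hρ _ _ hw, hρ _ _ hw']
      abel
    constructor <;> rw [hedge, hedge] <;> simp [Incident, Prod.ext_iff]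
  · intro h
    have hcorner₁ : ∀ v, H (v + (1, 1)) (v + (0, 1)) - H (v + (0, 1)) (v + (0, 1))
        = H (v + (1, 1)) v - H (v + (0, 1)) v := fun v => by
      have := (h (v + (0, 1))).1
      rwa [add_sub_cancel_right, (hdiag v).2] at this
    have hcorner₂ : ∀ v, H (v + (1, 1)) (v + (1, 0)) - H (v + (1, 0)) (v + (1, 0))
        = H (v + (1, 1)) v - H (v + (1, 0)) v := fun v => by
      have := (h (v + (1, 0))).2
      rwa [add_sub_cancel_right, (hdiag v).1] at this
    obtain ⟨A, hA⟩ := exists_potential_of_closed (fun v => H (v + (1, 0)) v - H v v)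
      (fun v => H (v + (0, 1)) v - H v v) fun v => by
        simp only [hdiag, hcorner₁, hcorner₂]
        abel
    refine ⟨A, fun f => H f f - A f, ?_⟩
    rintro v f (rfl | rfl | rfl | rfl) <;> dsimp only
    · abel
    · rw [(hA f).1]
      abel
    · rw [(hA f).2]
      abel
    · rw [← (hdiag f).1, (hA _).2, (hA f).1, (hdiag f).1, hcorner₂]
      abel

end AddCommGroup

theorem inner_sub_sub_eq_zero_iff {E : Type*} [NormedAddCommGroup E] [InnerProductSpace ℝ E]
    (a b c d : E) : ⟪a - b, c - d⟫_ℝ = 0 ↔ ⟪a, c⟫_ℝ - ⟪b, c⟫_ℝ = ⟪a, d⟫_ℝ - ⟪b, d⟫_ℝ := by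
  rw [inner_sub_left, inner_sub_right, inner_sub_right, sub_sub_sub_comm, sub_eq_zero]

theorem stmt_0_general (n : ℕ) (bV bF : ℤ × ℤ → EuclideanSpace ℝ (Fin n)) :
    (∃ ρV ρF : ℤ × ℤ → ℝ, ∀ v f : ℤ × ℤ, Incident v f →
        ⟪bV v, bF f⟫_ℝ = ρV v + ρF f) ↔
      (∀ v : ℤ × ℤ,
        ⟪bV (v + (1, 0)) - bV v, bF v - bF (v - (0, 1))⟫_ℝ = 0 ∧
        ⟪bV (v + (0, 1)) - bV v, bF v - bF (v - (1, 0))⟫_ℝ = 0) := by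
  simpa only [inner_sub_sub_eq_zero_iff] using
    exists_split_on_incident_iff fun v f => ⟪bV v, bF f⟫_ℝ

/-- A binet `(bV, bF)` admits functions `ρV, ρF` with `⟪bV v, bF f⟫ = ρV v + ρF f` for all
incident vertex–face pairs (i.e. it admits a Möbius lift / orthogonal sphere representation)
if and only if it is an orthogonal binet. -/
theorem stmt_0 (n : ℕ) (hn : 1 ≤ n) (bV bF : ℤ × ℤ → EuclideanSpace ℝ (Fin n)) :
    (∃ ρV ρF : ℤ × ℤ → ℝ, ∀ v f : ℤ × ℤ, Incident v f →
        ⟪bV v, bF f⟫_ℝ = ρV v + ρF f) ↔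
      (∀ v : ℤ × ℤ,
        ⟪bV (v + (1, 0)) - bV v, bF v - bF (v - (0, 1))⟫_ℝ = 0 ∧
        ⟪bV (v + (0, 1)) - bV v, bF v - bF (v - (1, 0))⟫_ℝ = 0) :=
  stmt_0_general n bV bF
end

section
/- Let xV, xF : ℤ × ℤ → (Fin 5 → ℝ) satisfy Q_M(xV(v), xF(f)) = 0 for every incident vertex–face pair (v, f), and suppose (x(d))₄ − (x(d))₃ ≠ 0 for every vertex and every face d. Define the stereographic projections bV(d) = ((xV(d))₀, (xV(d))₁, (xV(d))₂) / ((xV(d))₄ − (xV(d))₃) and likewise bF. Then (bV, bF) is an orthogonal binet: for every v ∈ ℤ × ℤ, ⟪bV(v+(1,0)) − bV(v), bF(v) − bF(v−(0,1))⟫ = 0 and ⟪bV(v+(0,1)) − bV(v), bF(v) − bF(v−(1,0))⟫ = 0. (Projections of polar binets with respect to the Möbius quadric are orthogonal binets.) -/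
/-!
Dividing by `x₄ - x₃` normalises a point of `ℝ⁵` to the lift `(b, h - 1/2, h + 1/2)` of its
stereographic projection `b`, with height `h = (x₃ + x₄) / (2 (x₄ - x₃))`. On such lifts the
Möbius form is `⟪b, c⟫ - h - h'`, so polarity makes `⟪b, c⟫` a sum of a vertex term and a face
term. Every such sum vanishes on the mixed difference `⟪b₁ - b₂, c₁ - c₂⟫`.
-/

open scoped InnerProductSpace

def QM (x y : Fin 5 → ℝ) : ℝ :=
  x 0 * y 0 + x 1 * y 1 + x 2 * y 2 + x 3 * y 3 - x 4 * y 4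

noncomputable def stereo (x : Fin 5 → ℝ) : EuclideanSpace ℝ (Fin 3) :=
  (x 4 - x 3)⁻¹ • (WithLp.equiv 2 (Fin 3 → ℝ)).symm ![x 0, x 1, x 2]

noncomputable def stereoHeight (x : Fin 5 → ℝ) : ℝ :=
  (x 3 + x 4) / (2 * (x 4 - x 3))

theorem inner_stereo_eq {x y : Fin 5 → ℝ} (hx : x 4 - x 3 ≠ 0) (hy : y 4 - y 3 ≠ 0) :
    ⟪stereo x, stereo y⟫_ℝ =
      QM x y / ((x 4 - x 3) * (y 4 - y 3)) + stereoHeight x + stereoHeight y := by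
  simp only [stereo, stereoHeight, QM, PiLp.inner_apply, PiLp.smul_apply,
    WithLp.equiv_symm_apply, smul_eq_mul, RCLike.inner_apply, conj_trivial,
    Fin.sum_univ_three, Matrix.cons_val_zero, Matrix.cons_val_one, Matrix.cons_val_two,
    Matrix.head_cons, Matrix.tail_cons]
  field_simp
  ring

theorem inner_stereo_of_QM_eq_zero {x y : Fin 5 → ℝ} (hxy : QM x y = 0)
    (hx : x 4 - x 3 ≠ 0) (hy : y 4 - y 3 ≠ 0) :
    ⟪stereo x, stereo y⟫_ℝ = stereoHeight x + stereoHeight y := by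
  rw [inner_stereo_eq hx hy, hxy, zero_div, zero_add]

theorem inner_sub_sub_eq_zero_of_add_eq_add {E : Type*} [NormedAddCommGroup E]
    [InnerProductSpace ℝ E] {a b f g : E} (h : ⟪a, f⟫_ℝ + ⟪b, g⟫_ℝ = ⟪a, g⟫_ℝ + ⟪b, f⟫_ℝ) :
    ⟪a - b, f - g⟫_ℝ = 0 := by
  simp only [inner_sub_left, inner_sub_right]
  linarith

theorem inner_stereo_sub_stereo_eq_zero {a b f g : Fin 5 → ℝ}
    (haf : QM a f = 0) (hag : QM a g = 0) (hbf : QM b f = 0) (hbg : QM b g = 0)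
    (ha : a 4 - a 3 ≠ 0) (hb : b 4 - b 3 ≠ 0) (hf : f 4 - f 3 ≠ 0) (hg : g 4 - g 3 ≠ 0) :
    ⟪stereo a - stereo b, stereo f - stereo g⟫_ℝ = 0 := by
  apply inner_sub_sub_eq_zero_of_add_eq_add
  rw [inner_stereo_of_QM_eq_zero haf ha hf, inner_stereo_of_QM_eq_zero hag ha hg,
    inner_stereo_of_QM_eq_zero hbf hb hf, inner_stereo_of_QM_eq_zero hbg hb hg]
  ring

/-- The stereographic projection of a polar binet with respect to the Möbius quadric is an
orthogonal binet. -/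
theorem stmt_2 (xV xF : ℤ × ℤ → Fin 5 → ℝ)
    (hpolar : ∀ v f : ℤ × ℤ, Incident v f → QM (xV v) (xF f) = 0)
    (hV : ∀ d : ℤ × ℤ, xV d 4 - xV d 3 ≠ 0) (hF : ∀ d : ℤ × ℤ, xF d 4 - xF d 3 ≠ 0) :
    ∀ v : ℤ × ℤ,
      ⟪stereo (xV (v + (1, 0))) - stereo (xV v),
        stereo (xF v) - stereo (xF (v - (0, 1)))⟫_ℝ = 0 ∧
      ⟪stereo (xV (v + (0, 1))) - stereo (xV v),
        stereo (xF v) - stereo (xF (v - (1, 0)))⟫_ℝ = 0 := by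
  intro v
  constructor <;>
  · apply inner_stereo_sub_stereo_eq_zero (hpolar _ _ ?_) (hpolar _ _ ?_) (hpolar _ _ ?_)
      (hpolar _ _ ?_) (hV _) (hV _) (hF _) (hF _) <;>
    simp [Incident, Prod.ext_iff]
end

section
/- Let uV, uF : ℤ × ℤ → (Fin 3 → ℝ), and suppose σV, σF : ℤ × ℤ → ℝ and σ̃V, σ̃F : ℤ × ℤ → ℝ are all nowhere zero and both satisfy ⟪uV(v), uF(f)⟫ = σV(v)·σF(f) and ⟪uV(v), uF(f)⟫ = σ̃V(v)·σ̃F(f) for every incident vertex–face pair (v, f). Then there exists α ∈ ℝ, α ≠ 0, such that σ̃V(v) = α·σV(v) for all v ∈ ℤ × ℤ and σ̃F(f) = α⁻¹·σF(f) for all f ∈ ℤ × ℤ. (Hence every orthogonal bi*net has exactly a one-parameter family of normal binets, equivalently of Laguerre lifts.) -/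
open Matrix

/-!
On each incident pair the two factorizations give `σV' v / σV v = σF f / σF' f`. The two corners
`f` and `f + (1, 0)` (resp. `f + (0, 1)`) of a face therefore carry the same vertex ratio
`σV' / σV`, so this ratio is invariant under both unit translations of `ℤ²`, hence a constant `α`;
evaluating the same identity at the incident pair `(f, f)` gives `σF' f = α⁻¹ σF f`.
-/

theorem Incident.refl (f : ℤ × ℤ) : Incident f f := Or.inl rfl

theorem Incident.add_one_zero (f : ℤ × ℤ) : Incident (f + (1, 0)) f := Or.inr (Or.inl rfl)

theorem Incident.add_zero_one (f : ℤ × ℤ) : Incident (f + (0, 1)) f := Or.inr (Or.inr (Or.inl rfl))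

theorem apply_eq_apply_zero_of_periodic_int_prod {β : Type*} {g : ℤ × ℤ → β}
    (hx : Function.Periodic g (1, 0)) (hy : Function.Periodic g (0, 1)) (v : ℤ × ℤ) :
    g v = g 0 := by
  have hv : v = v.2 • ((0 : ℤ), (1 : ℤ)) + v.1 • ((1 : ℤ), (0 : ℤ)) := by ext <;> simp
  rw [hv, hx.zsmul v.1, hy.zsmul_eq]

section Rescaling

variable {K : Type*} [Field K] {σV σF σV' σF' : ℤ × ℤ → K}

theorem div_eq_div_of_incident (hσV : ∀ v, σV v ≠ 0) (hσF' : ∀ f, σF' f ≠ 0)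
    (h : ∀ v f, Incident v f → σV v * σF f = σV' v * σF' f) {v f : ℤ × ℤ}
    (hvf : Incident v f) : σV' v / σV v = σF f / σF' f := by
  rw [div_eq_div_iff (hσV v) (hσF' f)]
  linear_combination -h v f hvf

theorem vertex_ratio_eq_apply_zero (hσV : ∀ v, σV v ≠ 0) (hσF' : ∀ f, σF' f ≠ 0)
    (h : ∀ v f, Incident v f → σV v * σF f = σV' v * σF' f) (v : ℤ × ℤ) :
    σV' v / σV v = σV' 0 / σV 0 := by
  have hratio {v f : ℤ × ℤ} (hvf : Incident v f) := div_eq_div_of_incident hσV hσF' h hvf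
  refine apply_eq_apply_zero_of_periodic_int_prod (g := fun v => σV' v / σV v)
    (fun f => ?_) (fun f => ?_) v
  · exact (hratio (Incident.add_one_zero f)).trans (hratio (Incident.refl f)).symm
  · exact (hratio (Incident.add_zero_one f)).trans (hratio (Incident.refl f)).symm

theorem exists_rescaling_of_mul_eq_mul (hσV : ∀ v, σV v ≠ 0) (hσV' : ∀ v, σV' v ≠ 0)
    (hσF' : ∀ f, σF' f ≠ 0) (h : ∀ v f, Incident v f → σV v * σF f = σV' v * σF' f) :
    ∃ α : K, α ≠ 0 ∧ (∀ v, σV' v = α * σV v) ∧ (∀ f, σF' f = α⁻¹ * σF f) := by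
  have hconst := vertex_ratio_eq_apply_zero hσV hσF' h
  set α := σV' 0 / σV 0
  have hα : α ≠ 0 := div_ne_zero (hσV' 0) (hσV 0)
  refine ⟨α, hα, fun v => ?_, fun f => ?_⟩
  · rw [← hconst v, div_mul_cancel₀ _ (hσV v)]
  · have hf : α = σF f / σF' f :=
      (hconst f).symm.trans (div_eq_div_of_incident hσV hσF' h (.refl f))
    rw [eq_inv_mul_iff_mul_eq₀ hα, hf, div_mul_cancel₀ _ (hσF' f)]

end Rescaling

theorem stmt_8_general (uV uF : ℤ × ℤ → Fin 3 → ℝ) (σV σF σV' σF' : ℤ × ℤ → ℝ)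
    (hσV : ∀ v : ℤ × ℤ, σV v ≠ 0)
    (hσV' : ∀ v : ℤ × ℤ, σV' v ≠ 0) (hσF' : ∀ f : ℤ × ℤ, σF' f ≠ 0)
    (h : ∀ v f : ℤ × ℤ, Incident v f → uV v ⬝ᵥ uF f = σV v * σF f)
    (h' : ∀ v f : ℤ × ℤ, Incident v f → uV v ⬝ᵥ uF f = σV' v * σF' f) :
    ∃ α : ℝ, α ≠ 0 ∧ (∀ v : ℤ × ℤ, σV' v = α * σV v) ∧
      (∀ f : ℤ × ℤ, σF' f = α⁻¹ * σF f) :=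
  exists_rescaling_of_mul_eq_mul hσV hσV' hσF' fun v f hvf => (h v f hvf).symm.trans (h' v f hvf)

/-- Any two choices of nowhere-zero functions `σ` with `⟪uV v, uF f⟫ = σV(v)σF(f)` on incident
pairs differ by a nonzero constant `α`, multiplied on vertices and divided on faces.
Hence every orthogonal bi*net has exactly a one-parameter family of normal binets. -/
theorem stmt_8 (uV uF : ℤ × ℤ → Fin 3 → ℝ) (σV σF σV' σF' : ℤ × ℤ → ℝ)
    (hσV : ∀ v : ℤ × ℤ, σV v ≠ 0) (hσF : ∀ f : ℤ × ℤ, σF f ≠ 0)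
    (hσV' : ∀ v : ℤ × ℤ, σV' v ≠ 0) (hσF' : ∀ f : ℤ × ℤ, σF' f ≠ 0)
    (h : ∀ v f : ℤ × ℤ, Incident v f → uV v ⬝ᵥ uF f = σV v * σF f)
    (h' : ∀ v f : ℤ × ℤ, Incident v f → uV v ⬝ᵥ uF f = σV' v * σF' f) :
    ∃ α : ℝ, α ≠ 0 ∧ (∀ v : ℤ × ℤ, σV' v = α * σV v) ∧
      (∀ f : ℤ × ℤ, σF' f = α⁻¹ * σF f) :=
  stmt_8_general uV uF σV σF σV' σF' hσV hσV' hσF' h h'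
end

section
/- Let nV, nF : ℤ × ℤ → EuclideanSpace ℝ (Fin 3) satisfy ⟪nV(v), nF(f)⟫ = 1 for every incident vertex–face pair (v, f) (a polar binet with respect to the unit sphere). Then (nV, nF) is an orthogonal binet, i.e. for every v ∈ ℤ × ℤ, ⟪nV(v+(1,0)) − nV(v), nF(v) − nF(v−(0,1))⟫ = 0 and ⟪nV(v+(0,1)) − nV(v), nF(v) − nF(v−(1,0))⟫ = 0; and (nV, nF) is a conjugate binet, i.e. for every p ∈ ℤ × ℤ the points nV(p), nV(p+(1,0)), nV(p+(0,1)), nV(p+(1,1)) are coplanar (the submodule spanned by their pairwise differences has finrank at most 2), and likewise for nF. -/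
open scoped InnerProductSpace

/-- The set of pairwise differences of elements of a set. -/
def pairDiffs {E : Type*} [AddCommGroup E] (s : Set E) : Set E :=
  {x | ∃ y ∈ s, ∃ z ∈ s, x = y - z}

/-- A map `g : ℤ × ℤ → E` is a conjugate net if the four points of each quad are coplanar,
i.e. the submodule spanned by their pairwise differences has finrank at most `2`. -/
def IsConjugateNet {E : Type*} [AddCommGroup E] [Module ℝ E] (g : ℤ × ℤ → E) : Prop :=
  ∀ p : ℤ × ℤ, Module.finrank ℝ
    (Submodule.span ℝ (pairDiffs
      ({g p, g (p + (1, 0)), g (p + (0, 1)), g (p + (1, 1))} : Set E))) ≤ 2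

lemma coplanar_aux (w : EuclideanSpace ℝ (Fin 3)) (s : Set (EuclideanSpace ℝ (Fin 3)))
    (hs : ∀ x ∈ s, ⟪x, w⟫_ℝ = 1) (hne : s.Nonempty) :
    Module.finrank ℝ (Submodule.span ℝ (pairDiffs s)) ≤ 2 := by
  have hw : w ≠ 0 := by
    obtain ⟨x, hx⟩ := hne
    intro h0
    have := hs x hx
    rw [h0, inner_zero_right] at this
    norm_num at this
  have hle : Submodule.span ℝ (pairDiffs s) ≤ (ℝ ∙ w)ᗮ := by
    rw [Submodule.span_le]
    rintro x ⟨y, hy, z, hz, rfl⟩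
    rw [SetLike.mem_coe, Submodule.mem_orthogonal_singleton_iff_inner_left,
      inner_sub_left, hs y hy, hs z hz]
    ring
  have h2 : Module.finrank ℝ ((ℝ ∙ w)ᗮ : Submodule ℝ (EuclideanSpace ℝ (Fin 3))) = 2 := by
    have := Submodule.finrank_add_finrank_orthogonal (K := (ℝ ∙ w))
    rw [finrank_span_singleton hw, finrank_euclideanSpace_fin] at this
    omega
  calc Module.finrank ℝ (Submodule.span ℝ (pairDiffs s)) ≤ _ := Submodule.finrank_mono hle
    _ = 2 := h2

/-- A polar binet with respect to the unit sphere (a normal binet) is both an orthogonal binet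
and a conjugate binet. -/
theorem stmt_9 (nV nF : ℤ × ℤ → EuclideanSpace ℝ (Fin 3))
    (h : ∀ v f : ℤ × ℤ, Incident v f → ⟪nV v, nF f⟫_ℝ = 1) :
    (∀ v : ℤ × ℤ,
      ⟪nV (v + (1, 0)) - nV v, nF v - nF (v - (0, 1))⟫_ℝ = 0 ∧
      ⟪nV (v + (0, 1)) - nV v, nF v - nF (v - (1, 0))⟫_ℝ = 0) ∧
    IsConjugateNet nV ∧ IsConjugateNet nF := by
  refine ⟨fun v => ?_, fun p => ?_, fun p => ?_⟩
  · have e1 : ⟪nV v, nF v⟫_ℝ = 1 := h v v (Or.inl rfl)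
    have e2 : ⟪nV (v + (1, 0)), nF v⟫_ℝ = 1 :=
      h _ _ (Or.inr (Or.inl rfl))
    have e3 : ⟪nV v, nF (v - (0, 1))⟫_ℝ = 1 :=
      h _ _ (Or.inr (Or.inr (Or.inl (by simp [Prod.ext_iff]))))
    have e4 : ⟪nV (v + (1, 0)), nF (v - (0, 1))⟫_ℝ = 1 :=
      h _ _ (Or.inr (Or.inr (Or.inr (by simp [Prod.ext_iff]))))
    have e5 : ⟪nV (v + (0, 1)), nF v⟫_ℝ = 1 :=
      h _ _ (Or.inr (Or.inr (Or.inl rfl)))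
    have e6 : ⟪nV v, nF (v - (1, 0))⟫_ℝ = 1 :=
      h _ _ (Or.inr (Or.inl (by simp [Prod.ext_iff])))
    have e7 : ⟪nV (v + (0, 1)), nF (v - (1, 0))⟫_ℝ = 1 :=
      h _ _ (Or.inr (Or.inr (Or.inr (by simp [Prod.ext_iff]))))
    constructor <;>
      · simp only [inner_sub_left, inner_sub_right, e1, e2, e3, e4, e5, e6, e7]
        ring
  · refine coplanar_aux (nF p) _ ?_ ⟨nV p, by simp⟩
    rintro x (rfl | rfl | rfl | rfl)
    · exact h _ _ (Or.inl rfl)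
    · exact h _ _ (Or.inr (Or.inl rfl))
    · exact h _ _ (Or.inr (Or.inr (Or.inl rfl)))
    · exact h _ _ (Or.inr (Or.inr (Or.inr rfl)))
  · refine coplanar_aux (nV (p + (1, 1))) _ ?_ ⟨nF p, by simp⟩
    rintro x (rfl | rfl | rfl | rfl) <;> rw [real_inner_comm]
    · exact h _ _ (Or.inr (Or.inr (Or.inr rfl)))
    · exact h _ _ (Or.inr (Or.inr (Or.inl (by simp [Prod.ext_iff]))))
    · exact h _ _ (Or.inr (Or.inl (by simp [Prod.ext_iff])))
    · exact h _ _ (Or.inl rfl)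
end

section
/- Let uV, uF : ℤ × ℤ → (Fin 3 → ℝ) and σV, σF, hV, hF : ℤ × ℤ → ℝ be such that Q_B((uV(v), σV(v), hV(v)), (uF(f), σF(f), hF(f))) = 0, i.e. ⟪uV(v), uF(f)⟫ = σV(v)·σF(f), for every incident vertex–face pair (v, f) (a polar binet with respect to the Blaschke cylinder). Then for every v ∈ ℤ × ℤ one has ⟪uV(v) ×₃ uV(v+(1,0)), uF(v−(0,1)) ×₃ uF(v)⟫ = 0 and ⟪uV(v) ×₃ uV(v+(0,1)), uF(v−(1,0)) ×₃ uF(v)⟫ = 0, where ×₃ is the cross product on ℝ³. (The projection of a polar binet with respect to the Blaschke cylinder is an orthogonal bi*net: the intersection lines of the corresponding planes at dual edges are orthogonal.) -/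
open Matrix

/-- The (degenerate) Blaschke form on `ℝ³ × ℝ × ℝ`:
`Q_B((u,σ,h),(u',σ',h')) = ⟪u,u'⟫ - σσ'`. -/
def QB (u : Fin 3 → ℝ) (σ h : ℝ) (u' : Fin 3 → ℝ) (σ' h' : ℝ) : ℝ :=
  u ⬝ᵥ u' - σ * σ'

/-! By the Binet–Cauchy identity, `⟪a ×₃ b, c ×₃ d⟫` is the determinant of the Gram matrix of
`a, b` against `c, d`. Polarity with respect to the Blaschke cylinder says that on incident pairs
`⟪uV v, uF f⟫ = σV v * σF f`, so for the two vertices and two faces of dual edges this Gram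
matrix is the rank-one matrix `(σV vᵢ * σF fⱼ)`, whose determinant vanishes. -/

theorem cross_dot_cross_eq_zero_of_dotProduct_eq_mul {R : Type*} [CommRing R]
    {a b c d : Fin 3 → R} {α β γ δ : R}
    (hac : a ⬝ᵥ c = α * γ) (had : a ⬝ᵥ d = α * δ)
    (hbc : b ⬝ᵥ c = β * γ) (hbd : b ⬝ᵥ d = β * δ) :
    (a ⨯₃ b) ⬝ᵥ (c ⨯₃ d) = 0 := by
  rw [cross_dot_cross, hac, had, hbc, hbd]
  ring

theorem incident_sub_snd (v : ℤ × ℤ) : Incident v (v - (0, 1)) :=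
  Or.inr <| Or.inr <| Or.inl <| by simp

theorem incident_sub_fst (v : ℤ × ℤ) : Incident v (v - (1, 0)) :=
  Or.inr <| Or.inl <| by simp

theorem incident_add_fst_sub_snd (v : ℤ × ℤ) : Incident (v + (1, 0)) (v - (0, 1)) :=
  Or.inr <| Or.inr <| Or.inr <| by ext <;> simp

theorem incident_add_snd_sub_fst (v : ℤ × ℤ) : Incident (v + (0, 1)) (v - (1, 0)) :=
  Or.inr <| Or.inr <| Or.inr <| by ext <;> simp

/-- The projection of a polar binet with respect to the Blaschke cylinder is an orthogonal
bi*net: the intersection lines of the corresponding planes at dual edges of every cross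
are orthogonal. -/
theorem stmt_10 (uV uF : ℤ × ℤ → Fin 3 → ℝ) (σV σF hV hF : ℤ × ℤ → ℝ)
    (hpolar : ∀ v f : ℤ × ℤ, Incident v f →
      QB (uV v) (σV v) (hV v) (uF f) (σF f) (hF f) = 0) :
    ∀ v : ℤ × ℤ,
      (uV v ⨯₃ uV (v + (1, 0))) ⬝ᵥ (uF (v - (0, 1)) ⨯₃ uF v) = 0 ∧
      (uV v ⨯₃ uV (v + (0, 1))) ⬝ᵥ (uF (v - (1, 0)) ⨯₃ uF v) = 0 := by
  have dot : ∀ v f, Incident v f → uV v ⬝ᵥ uF f = σV v * σF f := fun v f h =>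
    sub_eq_zero.mp (hpolar v f h)
  intro v
  have hvv : Incident v v := Or.inl rfl
  have hxv : Incident (v + (1, 0)) v := Or.inr (Or.inl rfl)
  have hyv : Incident (v + (0, 1)) v := Or.inr (Or.inr (Or.inl rfl))
  exact ⟨cross_dot_cross_eq_zero_of_dotProduct_eq_mul (dot _ _ (incident_sub_snd v))
      (dot _ _ hvv) (dot _ _ (incident_add_fst_sub_snd v)) (dot _ _ hxv),
    cross_dot_cross_eq_zero_of_dotProduct_eq_mul (dot _ _ (incident_sub_fst v))
      (dot _ _ hvv) (dot _ _ (incident_add_snd_sub_fst v)) (dot _ _ hyv)⟩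
end
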